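/- arXiv:1211.3968 — 4 statements merged into one kernel-verified Lean document; each statement's English description precedes it below -/
import Mathlib

section
/- The residue property of the domain wall partition function K_n: as x_n → y_n, K_n(x̄|ȳ) = g(x_n,y_n) · f(y_n, ȳ_n) · f(x̄_n, x_n) · K_{n-1}(x̄_n|ȳ_n) + regular terms; equivalently, the residue of K_n(x̄|ȳ) at x_n = y_n equals c · f(y_n, ȳ_n) · f(x̄_n, x_n) · K_{n-1}(x̄_n|ȳ_n), where K_n(x̄|ȳ) = Δ'_n(x̄) Δ_n(ȳ) h(x̄,ȳ) det_n[t(x_j,y_k)], Δ'_n(x̄) = Π_{j>k} g(x_j,x_k), Δ_n(ȳ) = Π_{j<k} g(y_j,y_k), and bars with subscripts denote omission of the indicated element. -/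
noncomputable def gfun (c x y : ℂ) : ℂ := c / (x - y)
noncomputable def ffun (c x y : ℂ) : ℂ := (x - y + c) / (x - y)
noncomputable def hfun (c x y : ℂ) : ℂ := (x - y + c) / c
noncomputable def tfun (c x y : ℂ) : ℂ := c ^ 2 / ((x - y) * (x - y + c))

/-- The Izergin determinant (domain wall partition function)
`K_n(x̄|ȳ) = Δ'_n(x̄) Δ_n(ȳ) h(x̄,ȳ) det_n[t(x_j,y_k)]`. -/
noncomputable def Kdet (c : ℂ) (n : ℕ) (x y : Fin n → ℂ) : ℂ :=
  (∏ j : Fin n, ∏ k : Fin n, if k < j then gfun c (x j) (x k) else 1) *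
  (∏ j : Fin n, ∏ k : Fin n, if j < k then gfun c (y j) (y k) else 1) *
  (∏ j : Fin n, ∏ k : Fin n, hfun c (x j) (y k)) *
  (Matrix.of fun j k => tfun c (x j) (y k)).det

/-! Multiplying the last row of `[t(x_j, y_k)]` by `x_n - y_n` removes the only pole at
`x_n = y_n`; in the limit that row becomes `(0, …, 0, c)`, so the determinant tends to
`c · det_{n-1}`. The scalar prefactor of `K_n` splits into that of `K_{n-1}` and the factors
involving `x_n` or `y_n`; these are regular at `x_n = y_n`, where they pair up into
`f(y_n, ȳ_n) f(x̄_n, x_n)` because `g(u, v) h(v, u) = -f(v, u)`. -/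

open Filter Topology Matrix Function

namespace Fin

variable {M : Type*} [CommMonoid M] {n : ℕ}

theorem prod_prod_succ (φ : Fin (n + 1) → Fin (n + 1) → M) :
    ∏ j, ∏ k, φ j k = (∏ j : Fin n, ∏ k : Fin n, φ j.castSucc k.castSucc) *
      (∏ j : Fin n, φ j.castSucc (last n)) * (∏ k : Fin n, φ (last n) k.castSucc) *
      φ (last n) (last n) := by
  simp only [prod_univ_castSucc, Finset.prod_mul_distrib]
  ac_rfl

theorem prod_prod_ite_lt_succ (φ : Fin (n + 1) → Fin (n + 1) → M) :
    ∏ j, ∏ k, (if k < j then φ j k else 1) =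
      (∏ j : Fin n, ∏ k : Fin n, if k < j then φ j.castSucc k.castSucc else 1) *
      ∏ k : Fin n, φ (last n) k.castSucc := by
  simp [prod_prod_succ, castSucc_lt_last, not_lt.2 (le_last _)]

theorem prod_prod_ite_gt_succ (φ : Fin (n + 1) → Fin (n + 1) → M) :
    ∏ j, ∏ k, (if j < k then φ j k else 1) =
      (∏ j : Fin n, ∏ k : Fin n, if j < k then φ j.castSucc k.castSucc else 1) *
      ∏ j : Fin n, φ j.castSucc (last n) := by
  simp [prod_prod_succ, castSucc_lt_last, not_lt.2 (le_last _)]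

end Fin

namespace Matrix

variable {R : Type*} [CommRing R] {n : ℕ}

theorem det_updateRow_last_single (A : Matrix (Fin (n + 1)) (Fin (n + 1)) R) (a : R) :
    (A.updateRow (Fin.last n) (Pi.single (Fin.last n) a)).det =
      a * (A.submatrix Fin.castSucc Fin.castSucc).det := by
  have hsingle : Pi.single (Fin.last n) a = a • Pi.single (M := fun _ => R) (Fin.last n) 1 := by
    rw [← Pi.single_smul', smul_eq_mul, mul_one]
  rw [hsingle, det_updateRow_smul, ← adjugate_apply, adjugate_fin_succ_eq_det_submatrix,
    ← two_mul, pow_mul, neg_one_sq, one_pow, one_mul]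
  simp [Fin.succAbove_last]

theorem tendsto_det_updateRow {ι X : Type*} [Fintype ι] [DecidableEq ι] [TopologicalSpace R]
    [IsTopologicalRing R] {l : Filter X} (A : Matrix ι ι R) (i : ι) {r : X → ι → R}
    {r₀ : ι → R} (hr : Tendsto r l (𝓝 r₀)) :
    Tendsto (fun z => (A.updateRow i (r z)).det) l (𝓝 (A.updateRow i r₀).det) :=
  ((continuous_const.matrix_updateRow i continuous_id).matrix_det.tendsto r₀).comp hr

end Matrix

variable {c : ℂ} {n : ℕ}

theorem gfun_mul_hfun_swap (hc : c ≠ 0) (a b : ℂ) : gfun c a b * hfun c b a = -ffun c b a := by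
  rcases eq_or_ne a b with rfl | hab
  · simp [gfun, ffun]
  · have : a - b ≠ 0 := sub_ne_zero.2 hab
    have : b - a ≠ 0 := sub_ne_zero.2 hab.symm
    simp only [gfun, hfun, ffun]
    field_simp
    ring

theorem hfun_self (hc : c ≠ 0) (a : ℂ) : hfun c a a = 1 := by
  simp [hfun, hc]

theorem continuousAt_gfun_left {a b : ℂ} (h : a ≠ b) : ContinuousAt (fun z => gfun c z b) a :=
  continuousAt_const.div (by fun_prop) (sub_ne_zero.2 h)

theorem continuous_hfun_left (b : ℂ) : Continuous fun z => hfun c z b := by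
  unfold hfun; fun_prop

theorem tendsto_sub_mul_tfun_self (c b : ℂ) :
    Tendsto (fun z => (z - b) * tfun c z b) (𝓝[≠] b) (𝓝 c) := by
  rcases eq_or_ne c 0 with rfl | hc
  · simp [tfun]
  have hcont : Tendsto (fun z => c ^ 2 / (z - b + c)) (𝓝 b) (𝓝 (c ^ 2 / (b - b + c))) :=
    (continuousAt_const.div (by fun_prop) (by simpa using hc)).tendsto
  rw [sub_self, zero_add, sq, mul_div_assoc, div_self hc, mul_one] at hcont
  refine (hcont.mono_left nhdsWithin_le_nhds).congr' ?_
  filter_upwards [self_mem_nhdsWithin] with z hz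
  have : z - b ≠ 0 := sub_ne_zero.2 hz
  rcases eq_or_ne (z - b + c) 0 with h0 | h0
  · simp [tfun, h0]
  · simp only [tfun]
    field_simp

theorem tendsto_sub_mul_tfun_of_ne {b d : ℂ} (hbd : b ≠ d) (hbdc : b - d + c ≠ 0) :
    Tendsto (fun z => (z - b) * tfun c z d) (𝓝 b) (𝓝 0) := by
  have : ContinuousAt (fun z => (z - b) * tfun c z d) b :=
    (by fun_prop : ContinuousAt (fun z : ℂ => z - b) b).mul <|
      continuousAt_const.div (by fun_prop) (mul_ne_zero (sub_ne_zero.2 hbd) hbdc)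
  simpa using this.tendsto

theorem tendsto_sub_mul_tfun_row {ι : Type*} [DecidableEq ι] (y : ι → ℂ) (i : ι)
    (hy : ∀ k, k ≠ i → y i ≠ y k) (hyc : ∀ k, k ≠ i → y i - y k + c ≠ 0) :
    Tendsto (fun z k => (z - y i) * tfun c z (y k)) (𝓝[≠] y i) (𝓝 (Pi.single i c)) := by
  refine tendsto_pi_nhds.2 fun k => ?_
  rcases eq_or_ne k i with rfl | hk
  · simpa using tendsto_sub_mul_tfun_self c (y k)
  · simpa [hk] using
      (tendsto_sub_mul_tfun_of_ne (hy k hk) (hyc k hk)).mono_left nhdsWithin_le_nhds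

noncomputable def izerginPrefactor (c : ℂ) (n : ℕ) (x y : Fin n → ℂ) : ℂ :=
  (∏ j : Fin n, ∏ k : Fin n, if k < j then gfun c (x j) (x k) else 1) *
  (∏ j : Fin n, ∏ k : Fin n, if j < k then gfun c (y j) (y k) else 1) *
  (∏ j : Fin n, ∏ k : Fin n, hfun c (x j) (y k))

theorem Kdet_eq_izerginPrefactor_mul_det (x y : Fin n → ℂ) :
    Kdet c n x y = izerginPrefactor c n x y * (of fun j k => tfun c (x j) (y k)).det :=
  rfl

noncomputable def izerginEdgeFactor (c : ℂ) (x y : Fin n → ℂ) (a b : ℂ) : ℂ :=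
  (∏ k, gfun c a (x k) * gfun c (y k) b * hfun c (x k) b * hfun c a (y k)) * hfun c a b

theorem izerginPrefactor_succ (x y : Fin (n + 1) → ℂ) :
    izerginPrefactor c (n + 1) x y =
      izerginPrefactor c n (fun i => x i.castSucc) (fun i => y i.castSucc) *
      izerginEdgeFactor c (fun i => x i.castSucc) (fun i => y i.castSucc)
        (x (Fin.last n)) (y (Fin.last n)) := by
  simp only [izerginPrefactor, izerginEdgeFactor, Fin.prod_prod_ite_lt_succ,
    Fin.prod_prod_ite_gt_succ, Fin.prod_prod_succ, Finset.prod_mul_distrib]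
  ring

theorem izerginEdgeFactor_self (hc : c ≠ 0) (x y : Fin n → ℂ) (b : ℂ) :
    izerginEdgeFactor c x y b b = (∏ k, ffun c b (y k)) * ∏ k, ffun c (x k) b := by
  rw [izerginEdgeFactor, hfun_self hc, mul_one, ← Finset.prod_mul_distrib]
  refine Finset.prod_congr rfl fun k _ => ?_
  calc gfun c b (x k) * gfun c (y k) b * hfun c (x k) b * hfun c b (y k)
      = (gfun c b (x k) * hfun c (x k) b) * (gfun c (y k) b * hfun c b (y k)) := by ring
    _ = _ := by rw [gfun_mul_hfun_swap hc, gfun_mul_hfun_swap hc]; ring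

theorem continuousAt_izerginEdgeFactor {x : Fin n → ℂ} {a₀ : ℂ} (hx : ∀ k, x k ≠ a₀)
    (y : Fin n → ℂ) (b : ℂ) : ContinuousAt (fun a => izerginEdgeFactor c x y a b) a₀ := by
  unfold izerginEdgeFactor
  refine (tendsto_finsetProd _ fun k _ => ?_).mul (continuous_hfun_left b).continuousAt
  exact (((continuousAt_gfun_left (hx k).symm).mul continuousAt_const).mul
    continuousAt_const).mul (continuous_hfun_left (y k)).continuousAt

theorem sub_mul_det_update_last (x y : Fin (n + 1) → ℂ) (w z : ℂ) :
    (z - w) * (of fun j k => tfun c (update x (Fin.last n) z j) (y k)).det =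
      ((of fun j k => tfun c (x j) (y k)).updateRow (Fin.last n)
        fun k => (z - w) * tfun c z (y k)).det := by
  have hrow : (of fun j k => tfun c (update x (Fin.last n) z j) (y k)) =
      (of fun j k => tfun c (x j) (y k)).updateRow (Fin.last n) fun k => tfun c z (y k) := by
    ext j k
    rcases eq_or_ne j (Fin.last n) with rfl | hj
    · simp
    · simp [hj]
  rw [hrow, ← det_updateRow_smul]
  rfl

theorem Kdet_residue_general (c : ℂ) (hc : c ≠ 0) (n : ℕ) (x y : Fin (n + 1) → ℂ)
    (hy : ∀ j k : Fin (n + 1), j ≠ k → y j ≠ y k)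
    (hxy : ∀ (j : Fin n) (k : Fin (n + 1)),
      x j.castSucc ≠ y k ∧ x j.castSucc - y k + c ≠ 0)
    (hyc : ∀ k : Fin (n + 1), k ≠ Fin.last n → y (Fin.last n) - y k + c ≠ 0) :
    Filter.Tendsto
      (fun z => (z - y (Fin.last n)) *
        Kdet c (n + 1) (Function.update x (Fin.last n) z) y)
      (nhdsWithin (y (Fin.last n)) {y (Fin.last n)}ᶜ)
      (nhds (c * (∏ k : Fin n, ffun c (y (Fin.last n)) (y k.castSucc)) *
        (∏ j : Fin n, ffun c (x j.castSucc) (y (Fin.last n))) *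
        Kdet c n (fun i => x i.castSucc) (fun i => y i.castSucc))) := by
  set w := y (Fin.last n)
  set x' : Fin n → ℂ := fun i => x i.castSucc
  set y' : Fin n → ℂ := fun i => y i.castSucc
  set T := of fun j k => tfun c (x j) (y k)
  have hsplit : ∀ z, (z - w) * Kdet c (n + 1) (update x (Fin.last n) z) y =
      izerginPrefactor c n x' y' * izerginEdgeFactor c x' y' z w *
        (T.updateRow (Fin.last n) fun k => (z - w) * tfun c z (y k)).det := by
    intro z
    rw [Kdet_eq_izerginPrefactor_mul_det, izerginPrefactor_succ, ← sub_mul_det_update_last]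
    simp only [update_self, update_of_ne (Fin.castSucc_ne_last _)]
    ring
  have hedge : Tendsto (fun z => izerginEdgeFactor c x' y' z w) (𝓝[≠] w)
      (𝓝 ((∏ k, ffun c w (y' k)) * ∏ k, ffun c (x' k) w)) := by
    rw [← izerginEdgeFactor_self hc]
    exact (continuousAt_izerginEdgeFactor (fun k => (hxy k _).1) y' w).tendsto.mono_left
      nhdsWithin_le_nhds
  have hdet := tendsto_det_updateRow T (Fin.last n)
    (tendsto_sub_mul_tfun_row y (Fin.last n) (fun k hk => hy _ _ hk.symm) hyc)
  rw [det_updateRow_last_single] at hdet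
  simp_rw [hsplit]
  convert (tendsto_const_nhds.mul hedge).mul hdet using 2
  rw [Kdet_eq_izerginPrefactor_mul_det]
  change _ = _ * (c * (of fun j k => tfun c (x' j) (y' k)).det)
  ring

/-- the residue of `K_{n+1}(x̄|ȳ)` at `x_n = y_n` equals
`c · f(y_n, ȳ_n) · f(x̄_n, x_n) · K_n(x̄_n|ȳ_n)`. -/
theorem Kdet_residue (c : ℂ) (hc : c ≠ 0) (n : ℕ) (x y : Fin (n + 1) → ℂ)
    (hx : ∀ j k : Fin n, j ≠ k → x j.castSucc ≠ x k.castSucc)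
    (hy : ∀ j k : Fin (n + 1), j ≠ k → y j ≠ y k)
    (hxy : ∀ (j : Fin n) (k : Fin (n + 1)),
      x j.castSucc ≠ y k ∧ x j.castSucc - y k + c ≠ 0)
    (hyc : ∀ k : Fin (n + 1), k ≠ Fin.last n → y (Fin.last n) - y k + c ≠ 0) :
    Filter.Tendsto
      (fun z => (z - y (Fin.last n)) *
        Kdet c (n + 1) (Function.update x (Fin.last n) z) y)
      (nhdsWithin (y (Fin.last n)) {y (Fin.last n)}ᶜ)
      (nhds (c * (∏ k : Fin n, ffun c (y (Fin.last n)) (y k.castSucc)) *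
        (∏ j : Fin n, ffun c (x j.castSucc) (y (Fin.last n))) *
        Kdet c n (fun i => x i.castSucc) (fun i => y i.castSucc))) :=
  Kdet_residue_general c hc n x y hy hxy hyc
end

section
/- The Izergin determinant K_n(x̄|ȳ) is a symmetric function of x̄ and a symmetric function of ȳ: permuting the entries of x̄ (or of ȳ) leaves K_n unchanged. -/
/-- The strictly-lower-triangular difference product equals the Vandermonde determinant. -/
lemma vandProd {n : ℕ} (v : Fin n → ℂ) :
    (∏ j : Fin n, ∏ k : Fin n, if k < j then (v j - v k) else 1)
      = (Matrix.vandermonde v).det := by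
  rw [Matrix.det_vandermonde, Finset.prod_comm]
  refine Finset.prod_congr rfl fun i _ => ?_
  rw [← Finset.prod_filter]
  congr 1
  ext j
  simp [Finset.mem_Ioi]

/-- Permuting the variables multiplies the difference product by the sign. -/
lemma vandProd_perm {n : ℕ} (v : Fin n → ℂ) (σ : Equiv.Perm (Fin n)) :
    (∏ j : Fin n, ∏ k : Fin n, if k < j then (v (σ j) - v (σ k)) else 1)
      = ((Equiv.Perm.sign σ : ℤ) : ℂ) *
        ∏ j : Fin n, ∏ k : Fin n, if k < j then (v j - v k) else 1 := by
  rw [vandProd v,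
    show (∏ j : Fin n, ∏ k : Fin n, if k < j then (v (σ j) - v (σ k)) else 1)
      = (Matrix.vandermonde (v ∘ σ)).det from vandProd (v ∘ σ)]
  have h : Matrix.vandermonde (v ∘ σ)
      = (Matrix.vandermonde v).submatrix σ id := by
    ext j k; simp [Matrix.vandermonde]
  rw [h, Matrix.det_permute]

/-- The `gfun` double product splits as constants times the inverse difference product. -/
lemma gProd_eq {n : ℕ} (c : ℂ) (v : Fin n → ℂ) :
    (∏ j : Fin n, ∏ k : Fin n, if k < j then gfun c (v j) (v k) else 1)
      = (∏ j : Fin n, ∏ k : Fin n, if k < j then c else (1:ℂ)) *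
        (∏ j : Fin n, ∏ k : Fin n, if k < j then (v j - v k) else 1)⁻¹ := by
  have key : ∀ j k : Fin n, (if k < j then gfun c (v j) (v k) else 1)
      = (if k < j then c else 1) * (if k < j then (v j - v k) else 1)⁻¹ := by
    intro j k; by_cases h : k < j <;> simp [h, gfun, div_eq_mul_inv]
  simp only [key, Finset.prod_mul_distrib, Finset.prod_inv_distrib]

lemma sign_sq {n : ℕ} (σ : Equiv.Perm (Fin n)) :
    ((Equiv.Perm.sign σ : ℤ) : ℂ) * ((Equiv.Perm.sign σ : ℤ) : ℂ) = 1 := by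
  rcases Int.units_eq_one_or (Equiv.Perm.sign σ) with h | h <;> simp [h]

lemma sign_inv {n : ℕ} (σ : Equiv.Perm (Fin n)) :
    ((Equiv.Perm.sign σ : ℤ) : ℂ)⁻¹ = ((Equiv.Perm.sign σ : ℤ) : ℂ) := by
  rcases Int.units_eq_one_or (Equiv.Perm.sign σ) with h | h <;> norm_num [h]

/-- Permuting the variables multiplies the lower `gfun` product by the sign. -/
lemma gProd_perm {n : ℕ} (c : ℂ) (v : Fin n → ℂ) (σ : Equiv.Perm (Fin n)) :
    (∏ j : Fin n, ∏ k : Fin n, if k < j then gfun c (v (σ j)) (v (σ k)) else 1)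
      = ((Equiv.Perm.sign σ : ℤ) : ℂ) *
        ∏ j : Fin n, ∏ k : Fin n, if k < j then gfun c (v j) (v k) else 1 := by
  rw [gProd_eq c v, gProd_eq c (fun i => v (σ i)), vandProd_perm v σ, mul_inv,
    sign_inv]
  ring

/-- The upper triangular product in terms of the lower one with negated variables. -/
lemma upper_eq_lower {n : ℕ} (c : ℂ) (v : Fin n → ℂ) :
    (∏ j : Fin n, ∏ k : Fin n, if j < k then gfun c (v j) (v k) else 1)
      = (∏ j : Fin n, ∏ k : Fin n, if k < j then gfun c (-v j) (-v k) else 1) := by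
  rw [Finset.prod_comm]
  refine Finset.prod_congr rfl fun j _ => Finset.prod_congr rfl fun k _ => ?_
  by_cases h : k < j <;> simp [h, gfun]
  ring_nf

/-- the Izergin determinant `K_n(x̄|ȳ)` is symmetric in `x̄`
and symmetric in `ȳ`. -/
theorem Kdet_symmetric (c : ℂ) (hc : c ≠ 0) (n : ℕ) (x y : Fin n → ℂ)
    (hx : Function.Injective x) (hy : Function.Injective y)
    (hxy : ∀ j k, x j ≠ y k ∧ x j - y k + c ≠ 0)
    (σ : Equiv.Perm (Fin n)) :
    Kdet c n (x ∘ σ) y = Kdet c n x y ∧ Kdet c n x (y ∘ σ) = Kdet c n x y := by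
  set s : ℂ := ((Equiv.Perm.sign σ : ℤ) : ℂ) with hs
  constructor
  · unfold Kdet
    have h1 : (∏ j : Fin n, ∏ k : Fin n,
        if k < j then gfun c ((x ∘ σ) j) ((x ∘ σ) k) else 1)
        = s * ∏ j : Fin n, ∏ k : Fin n, if k < j then gfun c (x j) (x k) else 1 :=
      gProd_perm c x σ
    have h2 : (∏ j : Fin n, ∏ k : Fin n, hfun c ((x ∘ σ) j) (y k))
        = ∏ j : Fin n, ∏ k : Fin n, hfun c (x j) (y k) :=
      Equiv.prod_comp σ (fun j => ∏ k : Fin n, hfun c (x j) (y k))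
    have h3 : (Matrix.of fun j k => tfun c ((x ∘ σ) j) (y k)).det
        = s * (Matrix.of fun j k => tfun c (x j) (y k)).det := by
      have : (Matrix.of fun j k => tfun c ((x ∘ σ) j) (y k))
          = (Matrix.of fun j k => tfun c (x j) (y k)).submatrix σ id := by
        ext j k; rfl
      rw [this, Matrix.det_permute]
    rw [h1, h2, h3]
    have hss : s * s = 1 := sign_sq σ
    have hsq : s ^ 2 = 1 := by rw [sq]; exact hss
    ring_nf
    rw [hsq]
    ring
  · unfold Kdet
    have h1 : (∏ j : Fin n, ∏ k : Fin n,
        if j < k then gfun c ((y ∘ σ) j) ((y ∘ σ) k) else 1)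
        = s * ∏ j : Fin n, ∏ k : Fin n, if j < k then gfun c (y j) (y k) else 1 := by
      rw [upper_eq_lower c (y ∘ σ), upper_eq_lower c y]
      exact gProd_perm c (fun i => -y i) σ
    have h2 : (∏ j : Fin n, ∏ k : Fin n, hfun c (x j) ((y ∘ σ) k))
        = ∏ j : Fin n, ∏ k : Fin n, hfun c (x j) (y k) := by
      refine Finset.prod_congr rfl fun j _ => ?_
      exact Equiv.prod_comp σ (fun k => hfun c (x j) (y k))
    have h3 : (Matrix.of fun j k => tfun c (x j) ((y ∘ σ) k)).det
        = s * (Matrix.of fun j k => tfun c (x j) (y k)).det := by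
      have : (Matrix.of fun j k => tfun c (x j) ((y ∘ σ) k))
          = (Matrix.of fun j k => tfun c (x j) (y k)).submatrix id σ := by
        ext j k; rfl
      rw [this, Matrix.det_permute']
    rw [h1, h2, h3]
    have hss : s * s = 1 := sign_sq σ
    have hsq : s ^ 2 = 1 := by rw [sq]; exact hss
    ring_nf
    rw [hsq]
    ring
end

section
/- The recursion relation for G̃_n at η_n = ξ_n (Lemma A.1, first residue): the claimed closed form G̃_n(γ) = (−1)^n t(ξ̄,η̄) h(η̄,η̄) h(ξ̄,ξ̄) (γ + Σ_{i=1}^n g^{-1}(η_i,ξ_i)) satisfies, when η_n → ξ_n, the singular part G̃_n(γ) = g(η_n,ξ_n) f(η̄_n, η_n) f(ξ_n, ξ̄_n) G̃_{n-1}(γ) + regular; i.e. the residue of the right-hand side of the closed form at η_n = ξ_n equals c · f(η̄_n, η_n) · f(ξ_n, ξ̄_n) times the closed form with n replaced by n−1 and the n-th variables removed. -/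
/-- The closed form of Lemma A.1:
`F_n(γ) = (−1)^n t(ξ̄,η̄) h(η̄,η̄) h(ξ̄,ξ̄) (γ + Σ_i (η_i−ξ_i)/c)`. -/
noncomputable def Ffun (c γ : ℂ) (n : ℕ) (η ξ : Fin n → ℂ) : ℂ :=
  (-1) ^ n * (∏ i : Fin n, ∏ j : Fin n, tfun c (ξ i) (η j)) *
  (∏ i : Fin n, ∏ j : Fin n, hfun c (η i) (η j)) *
  (∏ i : Fin n, ∏ j : Fin n, hfun c (ξ i) (ξ j)) *
  (γ + ∑ i : Fin n, (η i - ξ i) / c)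

lemma Ffun_succ_eq (c γ : ℂ) (n : ℕ) (η ξ : Fin (n + 1) → ℂ) :
    Ffun c γ (n + 1) η ξ =
    tfun c (ξ (Fin.last n)) (η (Fin.last n)) *
    (-( (∏ j : Fin n, tfun c (ξ (Fin.last n)) (η j.castSucc)) *
        (∏ i : Fin n, tfun c (ξ i.castSucc) (η (Fin.last n))) *
        (∏ j : Fin n, hfun c (η (Fin.last n)) (η j.castSucc)) *
        (∏ i : Fin n, hfun c (η i.castSucc) (η (Fin.last n))) *
        hfun c (η (Fin.last n)) (η (Fin.last n)) *
        (∏ j : Fin n, hfun c (ξ (Fin.last n)) (ξ j.castSucc)) *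
        (∏ i : Fin n, hfun c (ξ i.castSucc) (ξ (Fin.last n))) *
        hfun c (ξ (Fin.last n)) (ξ (Fin.last n)) *
        Ffun c (γ + (η (Fin.last n) - ξ (Fin.last n)) / c) n
          (fun i => η i.castSucc) (fun i => ξ i.castSucc))) := by
  unfold Ffun
  simp only [Fin.prod_univ_castSucc, Fin.sum_univ_castSucc, Finset.prod_mul_distrib, pow_succ]
  ring

lemma pointwise1 (c a x : ℂ) (hc : c ≠ 0) (h : a ≠ x) (h' : a - x + c ≠ 0) :
    tfun c a x * (hfun c a x * hfun c x a) = -ffun c x a := by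
  unfold tfun hfun ffun
  have hax : a - x ≠ 0 := sub_ne_zero.2 h
  have hxa : x - a ≠ 0 := sub_ne_zero.2 (Ne.symm h)
  field_simp
  ring

lemma pointwise2 (c a x : ℂ) (hc : c ≠ 0) (h : x ≠ a) (h' : x - a + c ≠ 0) :
    tfun c x a * (hfun c a x * hfun c x a) = -ffun c a x := by
  unfold tfun hfun ffun
  have hax : a - x ≠ 0 := sub_ne_zero.2 (Ne.symm h)
  have hxa : x - a ≠ 0 := sub_ne_zero.2 h
  field_simp
  ring

lemma key_lim (c a z : ℂ) (hz : z ≠ a) :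
    (z - a) * tfun c a z = -(c ^ 2) / (a - z + c) := by
  unfold tfun
  rcases eq_or_ne (a - z + c) 0 with h | h
  · simp [h]
  · have haz : a - z ≠ 0 := sub_ne_zero.2 (Ne.symm hz)
    field_simp
    ring


/-- first residue recursion of Lemma A.1:
`Res_{η_n = ξ_n} F_n(γ) = c · Π_{j<n} f(η_j,η_n)|_{η_n=ξ_n} · Π_{j<n} f(ξ_n,ξ_j) · F_{n-1}(γ)`. -/
theorem Ffun_residue_first (c : ℂ) (hc : c ≠ 0) (γ : ℂ) (n : ℕ)
    (η ξ : Fin (n + 1) → ℂ)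
    (h1 : ∀ (i : Fin (n + 1)) (j : Fin n),
      ξ i ≠ η j.castSucc ∧ ξ i - η j.castSucc + c ≠ 0)
    (h2 : ∀ i : Fin n,
      ξ i.castSucc ≠ ξ (Fin.last n) ∧ ξ i.castSucc - ξ (Fin.last n) + c ≠ 0) :
    Filter.Tendsto
      (fun z => (z - ξ (Fin.last n)) *
        Ffun c γ (n + 1) (Function.update η (Fin.last n) z) ξ)
      (nhdsWithin (ξ (Fin.last n)) {ξ (Fin.last n)}ᶜ)
      (nhds (c * (∏ j : Fin n, ffun c (η j.castSucc) (ξ (Fin.last n))) *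
        (∏ j : Fin n, ffun c (ξ (Fin.last n)) (ξ j.castSucc)) *
        Ffun c γ n (fun i => η i.castSucc) (fun i => ξ i.castSucc))) := by
  set a := ξ (Fin.last n) with ha
  set W : ℂ → ℂ := fun z =>
    -( (∏ j : Fin n, tfun c a (η j.castSucc)) *
       (∏ i : Fin n, tfun c (ξ i.castSucc) z) *
       (∏ j : Fin n, hfun c z (η j.castSucc)) *
       (∏ i : Fin n, hfun c (η i.castSucc) z) *
       hfun c z z *
       (∏ j : Fin n, hfun c a (ξ j.castSucc)) *
       (∏ i : Fin n, hfun c (ξ i.castSucc) a) *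
       hfun c a a *
       Ffun c (γ + (z - a) / c) n (fun i => η i.castSucc) (fun i => ξ i.castSucc)) with hW
  -- the function agrees with z ↦ (-(c^2)/(a-z+c)) * W z off a
  have hupd : ∀ z : ℂ, ∀ j : Fin n,
      Function.update η (Fin.last n) z j.castSucc = η j.castSucc := fun z j =>
    Function.update_of_ne (Fin.castSucc_lt_last j).ne _ _
  have hG : ∀ z ∈ ({a}ᶜ : Set ℂ),
      (z - a) * Ffun c γ (n + 1) (Function.update η (Fin.last n) z) ξ
        = (-(c ^ 2) / (a - z + c)) * W z := by
    intro z hz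
    rw [Ffun_succ_eq]
    simp only [Function.update_self, hupd z, hW, ← ha]
    rw [← mul_assoc, key_lim c a z hz]

  -- continuity of the regularized function at a
  have hQ : ContinuousAt (fun z => -(c ^ 2) / (a - z + c)) a := by
    apply ContinuousAt.div continuousAt_const (by fun_prop)
    simpa using hc
  have hCt : ContinuousAt (fun z => ∏ i : Fin n, tfun c (ξ i.castSucc) z) a := by
    apply tendsto_finset_prod
    intro i _
    unfold tfun
    exact ContinuousAt.div continuousAt_const (by fun_prop)
      (mul_ne_zero (sub_ne_zero.2 (h2 i).1) (h2 i).2)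
  have hH1 : Continuous (fun z => ∏ j : Fin n, hfun c z (η j.castSucc)) := by
    apply continuous_finset_prod
    intro j _
    unfold hfun
    fun_prop
  have hH2 : Continuous (fun z => ∏ i : Fin n, hfun c (η i.castSucc) z) := by
    apply continuous_finset_prod
    intro i _
    unfold hfun
    fun_prop
  have hzz : Continuous (fun z : ℂ => hfun c z z) := by unfold hfun; fun_prop
  have hF : Continuous (fun z =>
      Ffun c (γ + (z - a) / c) n (fun i => η i.castSucc) (fun i => ξ i.castSucc)) := by
    unfold Ffun
    fun_prop
  have hWc : ContinuousAt W a := by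
    rw [hW]
    exact ContinuousAt.neg
      ((((((((continuousAt_const.mul hCt).mul hH1.continuousAt).mul
        hH2.continuousAt).mul hzz.continuousAt).mul continuousAt_const).mul
        continuousAt_const).mul continuousAt_const).mul hF.continuousAt)
  have hGc : ContinuousAt (fun z => (-(c ^ 2) / (a - z + c)) * W z) a := hQ.mul hWc
  -- the value at a
  have e2 : hfun c a a = 1 := by simp [hfun, hc]
  have e3 : Ffun c (γ + (a - a) / c) n (fun i => η i.castSucc) (fun i => ξ i.castSucc)
      = Ffun c γ n (fun i => η i.castSucc) (fun i => ξ i.castSucc) := by simp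
  have hsq : ((-1 : ℂ)) ^ n * ((-1 : ℂ)) ^ n = 1 := by
    rw [← pow_add, ← two_mul, pow_mul]; norm_num
  have m1 : (∏ j : Fin n, tfun c a (η j.castSucc)) *
      ((∏ j : Fin n, hfun c a (η j.castSucc)) * (∏ j : Fin n, hfun c (η j.castSucc) a))
      = (-1) ^ n * ∏ j : Fin n, ffun c (η j.castSucc) a := by
    rw [← Finset.prod_mul_distrib, ← Finset.prod_mul_distrib]
    rw [Finset.prod_congr rfl fun j _ =>
      pointwise1 c a (η j.castSucc) hc (h1 (Fin.last n) j).1 (h1 (Fin.last n) j).2]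
    rw [show (∏ j : Fin n, -ffun c (η j.castSucc) a)
        = ∏ j : Fin n, (-1) * ffun c (η j.castSucc) a by simp,
      Finset.prod_mul_distrib, Finset.prod_const]
    simp
  have m2 : (∏ i : Fin n, tfun c (ξ i.castSucc) a) *
      ((∏ j : Fin n, hfun c a (ξ j.castSucc)) * (∏ i : Fin n, hfun c (ξ i.castSucc) a))
      = (-1) ^ n * ∏ j : Fin n, ffun c a (ξ j.castSucc) := by
    rw [← Finset.prod_mul_distrib, ← Finset.prod_mul_distrib]
    rw [Finset.prod_congr rfl fun j _ =>
      pointwise2 c a (ξ j.castSucc) hc (h2 j).1 (h2 j).2]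
    rw [show (∏ j : Fin n, -ffun c a (ξ j.castSucc))
        = ∏ j : Fin n, (-1) * ffun c a (ξ j.castSucc) by simp,
      Finset.prod_mul_distrib, Finset.prod_const]
    simp
  have hc2 : -(c ^ 2) / (a - a + c) = -c := by
    rw [show a - a + c = c by ring]
    field_simp
  have hval : (-(c ^ 2) / (a - a + c)) * W a
      = c * (∏ j : Fin n, ffun c (η j.castSucc) a) *
        (∏ j : Fin n, ffun c a (ξ j.castSucc)) *
        Ffun c γ n (fun i => η i.castSucc) (fun i => ξ i.castSucc) := by
    rw [hW]
    simp only [hc2, e2, e3]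
    linear_combination
      (c * (∏ i : Fin n, tfun c (ξ i.castSucc) a) *
        (∏ j : Fin n, hfun c a (ξ j.castSucc)) * (∏ i : Fin n, hfun c (ξ i.castSucc) a) *
        Ffun c γ n (fun i => η i.castSucc) (fun i => ξ i.castSucc)) * m1 +
      (c * ((-1 : ℂ)) ^ n * (∏ j : Fin n, ffun c (η j.castSucc) a) *
        Ffun c γ n (fun i => η i.castSucc) (fun i => ξ i.castSucc)) * m2 +
      (c * (∏ j : Fin n, ffun c (η j.castSucc) a) *
        (∏ j : Fin n, ffun c a (ξ j.castSucc)) *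
        Ffun c γ n (fun i => η i.castSucc) (fun i => ξ i.castSucc)) * hsq
  -- conclude
  refine tendsto_nhdsWithin_congr (fun z hz => (hG z hz).symm) ?_
  rw [← hval]
  exact hGc.tendsto.mono_left nhdsWithin_le_nhds
end

section
/- Permutation symmetry of the partition-sum G_n(ζ): the function G_n(ζ) = Σ over partitions of {η_1,…,η_n} and {ξ_1,…,ξ_n} into subsets (η_I, η_II) and (ξ_I, ξ_II) of equal cardinalities of ζ^{|II|} f(ξ_I,ξ_II) f(η_II,η_I) K_{|I|}(η_I|ξ_I) K_{|II|}(ξ_II+c|η_II) is a symmetric function of (η_1,…,η_n) and a symmetric function of (ξ_1,…,ξ_n). -/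
/-- The partition sum `G_n(ζ)` of Lemma 4.1: the sum over all partitions
`ξ̄ = ξ_I ⊔ ξ_II`, `η̄ = η_I ⊔ η_II` with `|η_I| = |ξ_I|` of
`ζ^{|II|} f(ξ_I,ξ_II) f(η_II,η_I) K_{|I|}(η_I|ξ_I) K_{|II|}(ξ_II+c|η_II)`.
Here `S` indexes `ξ_I` and `T` indexes `η_I`. -/
noncomputable def Gsum (c ζ : ℂ) (n : ℕ) (η ξ : Fin n → ℂ) : ℂ :=
  ∑ S : Finset (Fin n), ∑ T : Finset (Fin n),
    if h : T.card = S.card then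
      ζ ^ (n - S.card) *
      (∏ i ∈ S, ∏ j ∈ Sᶜ, ffun c (ξ i) (ξ j)) *
      (∏ i ∈ Tᶜ, ∏ j ∈ T, ffun c (η i) (η j)) *
      Kdet c S.card (fun i => η ((T.orderIsoOfFin h) i))
        (fun i => ξ ((S.orderIsoOfFin rfl) i)) *
      Kdet c Sᶜ.card (fun i => ξ ((Sᶜ.orderIsoOfFin rfl) i) + c)
        (fun i => η ((Tᶜ.orderIsoOfFin
          (by simp [Finset.card_compl, h])) i))
    else 0

/-!
Reindexing the sum by `σ` (`η_I ↦ σ(η_I)`, resp. `ξ_I ↦ σ(ξ_I)`) matches the `f`-factors term by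
term and only changes the order in which the entries of each Izergin determinant are listed.
`K_m(x̄|ȳ)` does not see that order: permuting `x̄` by `τ` multiplies `det[t(x_j,y_k)]` by
`sgn τ`, and also `Π_{j>k} g(x_j,x_k) = c^{m(m-1)/2} / Δ(x̄)` through the Vandermonde `Δ(x̄)`,
while `Π h(x_j,y_k)` is symmetric; the same holds for `ȳ`, since
`Π_{j<k} g(y_j,y_k) = Π_{j>k} g(-y_j,-y_k)`.
-/

open Finset Function Equiv

lemma Int.cast_units_mul_self {R : Type*} [Ring R] (u : ℤˣ) : ((u : ℤ) : R) * (u : ℤ) = 1 := by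
  rw [← Int.cast_mul, Int.units_coe_mul_self, Int.cast_one]

lemma Finset.map_equiv_compl {α β : Type*} [Fintype α] [Fintype β] [DecidableEq α] [DecidableEq β]
    (e : α ≃ β) (s : Finset α) : (s.map e.toEmbedding)ᶜ = sᶜ.map e.toEmbedding := by
  ext b
  simp [mem_map_equiv]

lemma exists_perm_comp_eq_of_range_eq {α : Type*} {m : ℕ} (e e' : Fin m ↪ α)
    (h : Set.range e = Set.range e') : ∃ τ : Perm (Fin m), ⇑e' = e ∘ τ :=
  ⟨(Equiv.ofInjective e' e'.injective).trans
      ((Equiv.setCongr h.symm).trans (Equiv.ofInjective e e.injective).symm),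
    funext fun i => by simp [Equiv.apply_ofInjective_symm e.injective]⟩

section Kdet

variable (c : ℂ) {m : ℕ}

lemma prod_gfun_lt_eq_div_det_vandermonde (x : Fin m → ℂ) :
    (∏ j, ∏ k, if k < j then gfun c (x j) (x k) else 1) =
      (∏ j : Fin m, ∏ k : Fin m, if k < j then c else 1) / (Matrix.vandermonde x).det := by
  have hV : (Matrix.vandermonde x).det = ∏ j, ∏ k, if k < j then x j - x k else 1 := by
    rw [Matrix.det_vandermonde, prod_comm]
    refine prod_congr rfl fun j _ => ?_
    rw [← prod_filter]
    congr 1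
    ext k
    simp
  rw [hV, ← prod_div_distrib]
  refine prod_congr rfl fun j _ => ?_
  rw [← prod_div_distrib]
  refine prod_congr rfl fun k _ => ?_
  split_ifs <;> simp [gfun]

lemma prod_gfun_lt_comp_perm (x : Fin m → ℂ) (τ : Perm (Fin m)) :
    (∏ j, ∏ k, if k < j then gfun c ((x ∘ τ) j) ((x ∘ τ) k) else 1) =
      (Perm.sign τ : ℤ) * ∏ j, ∏ k, if k < j then gfun c (x j) (x k) else 1 := by
  have hV : Matrix.vandermonde (x ∘ τ) = (Matrix.vandermonde x).submatrix τ id := rfl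
  rw [prod_gfun_lt_eq_div_det_vandermonde, prod_gfun_lt_eq_div_det_vandermonde, hV,
    Matrix.det_permute]
  rcases Int.units_eq_one_or (Perm.sign τ) with h | h <;> simp [h, div_neg]

lemma prod_gfun_gt_eq_prod_gfun_lt_neg (y : Fin m → ℂ) :
    (∏ j, ∏ k, if j < k then gfun c (y j) (y k) else 1) =
      ∏ j, ∏ k, if k < j then gfun c (-y j) (-y k) else 1 := by
  rw [prod_comm]
  simp only [gfun, neg_sub_neg]

lemma Kdet_comp_perm_left (x y : Fin m → ℂ) (τ : Perm (Fin m)) :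
    Kdet c m (x ∘ τ) y = Kdet c m x y := by
  have hH : ∏ j, ∏ k, hfun c ((x ∘ τ) j) (y k) = ∏ j, ∏ k, hfun c (x j) (y k) :=
    Equiv.prod_comp τ fun j => ∏ k, hfun c (x j) (y k)
  have hT : (Matrix.of fun j k => tfun c ((x ∘ τ) j) (y k)) =
      (Matrix.of fun j k => tfun c (x j) (y k)).submatrix τ id := rfl
  calc Kdet c m (x ∘ τ) y = (Perm.sign τ : ℤ) * (Perm.sign τ : ℤ) * Kdet c m x y := by
        simp only [Kdet, prod_gfun_lt_comp_perm, hH, hT, Matrix.det_permute]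
        ring
    _ = Kdet c m x y := by rw [Int.cast_units_mul_self, one_mul]

lemma Kdet_comp_perm_right (x y : Fin m → ℂ) (τ : Perm (Fin m)) :
    Kdet c m x (y ∘ τ) = Kdet c m x y := by
  have hG : (∏ j, ∏ k, if j < k then gfun c ((y ∘ τ) j) ((y ∘ τ) k) else 1) =
      (Perm.sign τ : ℤ) * ∏ j, ∏ k, if j < k then gfun c (y j) (y k) else 1 := by
    rw [prod_gfun_gt_eq_prod_gfun_lt_neg, prod_gfun_gt_eq_prod_gfun_lt_neg]
    exact prod_gfun_lt_comp_perm c (-y) τ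
  have hH : ∏ j, ∏ k, hfun c (x j) ((y ∘ τ) k) = ∏ j, ∏ k, hfun c (x j) (y k) :=
    prod_congr rfl fun j _ => Equiv.prod_comp τ fun k => hfun c (x j) (y k)
  have hT : (Matrix.of fun j k => tfun c (x j) ((y ∘ τ) k)) =
      (Matrix.of fun j k => tfun c (x j) (y k)).submatrix id τ := rfl
  calc Kdet c m x (y ∘ τ) = (Perm.sign τ : ℤ) * (Perm.sign τ : ℤ) * Kdet c m x y := by
        simp only [Kdet, hG, hH, hT, Matrix.det_permute']
        ring
    _ = Kdet c m x y := by rw [Int.cast_units_mul_self, one_mul]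

lemma Kdet_comp_eq_of_range_eq {α β : Type*} (x : α → ℂ) (y : β → ℂ) {m' : ℕ} (hm : m = m')
    (e : Fin m ↪ α) (e' : Fin m' ↪ α) (f : Fin m ↪ β) (f' : Fin m' ↪ β)
    (he : Set.range e = Set.range e') (hf : Set.range f = Set.range f') :
    Kdet c m (x ∘ e) (y ∘ f) = Kdet c m' (x ∘ e') (y ∘ f') := by
  subst hm
  obtain ⟨τ, hτ⟩ := exists_perm_comp_eq_of_range_eq e e' he
  obtain ⟨υ, hυ⟩ := exists_perm_comp_eq_of_range_eq f f' hf
  rw [hτ, hυ, ← comp_assoc, ← comp_assoc, Kdet_comp_perm_left, Kdet_comp_perm_right]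

end Kdet

lemma Kdet_orderIsoOfFin_map {α α' β β' : Type*} [LinearOrder α] [LinearOrder α'] [LinearOrder β]
    [LinearOrder β'] (c : ℂ) (x : α' → ℂ) (y : β' → ℂ) (σ : α ≃ α') (υ : β ≃ β')
    {s : Finset α} {s' : Finset α'} {t : Finset β} {t' : Finset β'} {m m' : ℕ}
    (hs : s.card = m) (hs' : s'.card = m') (ht : t.card = m) (ht' : t'.card = m')
    (hss' : s.map σ.toEmbedding = s') (htt' : t.map υ.toEmbedding = t') :
    Kdet c m (fun i => x (σ (s.orderIsoOfFin hs i))) (fun i => y (υ (t.orderIsoOfFin ht i))) =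
      Kdet c m' (fun i => x (s'.orderIsoOfFin hs' i)) (fun i => y (t'.orderIsoOfFin ht' i)) := by
  refine Kdet_comp_eq_of_range_eq c x y (by rw [← hs, ← hs', ← hss', card_map])
    ((s.orderEmbOfFin hs).toEmbedding.trans σ.toEmbedding) (s'.orderEmbOfFin hs').toEmbedding
    ((t.orderEmbOfFin ht).toEmbedding.trans υ.toEmbedding) (t'.orderEmbOfFin ht').toEmbedding
    ?_ ?_
  · rw [Embedding.coe_trans, Set.range_comp]
    simp [← hss']
  · rw [Embedding.coe_trans, Set.range_comp]
    simp [← htt']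

lemma Gsum_comp_perm_left (c ζ : ℂ) (n : ℕ) (η ξ : Fin n → ℂ) (σ : Perm (Fin n)) :
    Gsum c ζ n (η ∘ σ) ξ = Gsum c ζ n η ξ := by
  unfold Gsum
  refine sum_congr rfl fun S _ => Fintype.sum_equiv σ.finsetCongr _ _ fun T => ?_
  rw [finsetCongr_apply]
  refine dite_congr (by rw [card_map]) (fun h => ?_) (fun _ => rfl)
  congr 1
  congr 1
  congr 1
  · simp only [map_equiv_compl, prod_map, comp_apply, coe_toEmbedding]
  · exact Kdet_orderIsoOfFin_map c η ξ σ (Equiv.refl _) ((card_map _).symm.trans h) h rfl rfl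
      rfl (by simp)
  · exact Kdet_orderIsoOfFin_map c (fun a => ξ a + c) η (Equiv.refl _) σ rfl rfl
      (by simp [card_compl, ← h]) (by simp [card_compl, h]) (by simp) (map_equiv_compl σ T).symm

lemma Gsum_comp_perm_right (c ζ : ℂ) (n : ℕ) (η ξ : Fin n → ℂ) (σ : Perm (Fin n)) :
    Gsum c ζ n η (ξ ∘ σ) = Gsum c ζ n η ξ := by
  unfold Gsum
  refine Fintype.sum_equiv σ.finsetCongr _ _ fun S => sum_congr rfl fun T _ => ?_
  rw [finsetCongr_apply]
  refine dite_congr (by rw [card_map]) (fun h => ?_) (fun _ => rfl)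
  congr 1
  congr 1
  congr 1
  · simp only [map_equiv_compl, prod_map, comp_apply, coe_toEmbedding, card_map]
  · exact Kdet_orderIsoOfFin_map c η ξ (Equiv.refl _) σ (h.trans (card_map _)) h rfl rfl
      (by simp) rfl
  · exact Kdet_orderIsoOfFin_map c (fun a => ξ a + c) η σ (Equiv.refl _) rfl rfl
      (by simp [card_compl, h]) (by simp [card_compl, h]) (map_equiv_compl σ S).symm (by simp)

theorem Gsum_symmetric_general (c : ℂ) (ζ : ℂ) (n : ℕ)
    (η ξ : Fin n → ℂ)
    (σ : Equiv.Perm (Fin n)) :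
    Gsum c ζ n (η ∘ σ) ξ = Gsum c ζ n η ξ ∧
    Gsum c ζ n η (ξ ∘ σ) = Gsum c ζ n η ξ :=
  ⟨Gsum_comp_perm_left c ζ n η ξ σ, Gsum_comp_perm_right c ζ n η ξ σ⟩

/-- the partition sum `G_n(ζ)` is a symmetric function of
`(η_1,…,η_n)` and a symmetric function of `(ξ_1,…,ξ_n)`. -/
theorem Gsum_symmetric (c : ℂ) (hc : c ≠ 0) (ζ : ℂ) (n : ℕ)
    (η ξ : Fin n → ℂ)
    (hη : Function.Injective η) (hξ : Function.Injective ξ)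
    (hgen : ∀ i j, ξ i ≠ η j ∧ η i - ξ j + c ≠ 0 ∧
      ξ i + c ≠ η j ∧ ξ i + 2 * c ≠ η j)
    (σ : Equiv.Perm (Fin n)) :
    Gsum c ζ n (η ∘ σ) ξ = Gsum c ζ n η ξ ∧
    Gsum c ζ n η (ξ ∘ σ) = Gsum c ζ n η ξ :=
  Gsum_symmetric_general c ζ n η ξ σ
end
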